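/- arXiv:1412.7874 — 3 statements merged into one kernel-verified Lean document; each statement's English description precedes it below -/
import Mathlib

section
/- The Konno density function f_K(x;a) = sqrt(1-a^2) / (π (1-x^2) sqrt(a^2 - x^2)) on the interval (-a, a), with 0 < a < 1, integrates to 1 over (-a, a); i.e., ∫_{-a}^{a} sqrt(1-a^2)/(π (1-x^2) sqrt(a^2-x^2)) dx = 1. -/
/-!
With `b = √(1 - a²)`, the function `arcsin (b / a * (x / √(1 - x²))) / π` is a primitive of the
density on `(-a, a)` (it is `arctan (b x / √(a² - x²)) / π` there, which the substitutions
`x = a sin θ`, `t = tan θ` produce from `∫ b / (1 + b² t²) dt`). Unlike the arctangent form it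
extends continuously to `[-a, a]`, with the values `∓ 1/2` at `∓ a`. Since the density is
nonnegative, it is integrable on `(-a, a)` and the fundamental theorem of calculus gives `1`.
-/

open Real Set

lemma hasDerivAt_div_sqrt_one_sub_sq {x : ℝ} (hx : x ^ 2 < 1) :
    HasDerivAt (fun x => x / √(1 - x ^ 2)) (1 / ((1 - x ^ 2) * √(1 - x ^ 2))) x := by
  have hpos : 0 < 1 - x ^ 2 := by linarith
  have hs : HasDerivAt (fun x => √(1 - x ^ 2)) (-(2 * x) / (2 * √(1 - x ^ 2))) x := by
    simpa using (((hasDerivAt_id x).pow 2).const_sub 1).sqrt hpos.ne'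
  refine ((hasDerivAt_id' x).div hs (sqrt_pos.2 hpos).ne').congr_deriv ?_
  have := sq_sqrt hpos.le
  field_simp
  linear_combination -x ^ 2 * this

lemma sq_lt_one_of_mem_Icc {a x : ℝ} (ha1 : a < 1) (hx : x ∈ Icc (-a) a) : x ^ 2 < 1 := by
  rw [sq_lt_one_iff_abs_lt_one, abs_lt]
  exact ⟨by linarith [hx.1], by linarith [hx.2]⟩

noncomputable def konnoPrimitive (a x : ℝ) : ℝ :=
  arcsin (√(1 - a ^ 2) / a * (x / √(1 - x ^ 2))) / π

lemma konnoPrimitive_neg (a x : ℝ) : konnoPrimitive a (-x) = -konnoPrimitive a x := by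
  simp only [konnoPrimitive, neg_sq, neg_div, mul_neg, arcsin_neg]

lemma konnoPrimitive_self {a : ℝ} (ha : 0 < a) (ha1 : a < 1) : konnoPrimitive a a = 1 / 2 := by
  have hb : 0 < √(1 - a ^ 2) := sqrt_pos.2 (by nlinarith)
  rw [konnoPrimitive, div_mul_div_comm, mul_comm a, div_self (by positivity), arcsin_one]
  field_simp

lemma continuousOn_konnoPrimitive {a : ℝ} (ha1 : a < 1) :
    ContinuousOn (konnoPrimitive a) (Icc (-a) a) := by
  have hs : ∀ x ∈ Icc (-a) a, √(1 - x ^ 2) ≠ 0 := fun x hx =>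
    (sqrt_pos.2 (by linarith [sq_lt_one_of_mem_Icc ha1 hx])).ne'
  exact (continuous_arcsin.comp_continuousOn
    (continuousOn_const.mul (continuousOn_id.div (by fun_prop) hs))).div_const π

lemma hasDerivAt_konnoPrimitive {a x : ℝ} (ha1 : a < 1) (hx : x ∈ Ioo (-a) a) :
    HasDerivAt (konnoPrimitive a)
      (√(1 - a ^ 2) / (π * (1 - x ^ 2) * √(a ^ 2 - x ^ 2))) x := by
  have ha : 0 < a := by linarith [hx.1, hx.2]
  have hx1 : x ^ 2 < 1 := sq_lt_one_of_mem_Icc ha1 (Ioo_subset_Icc_self hx)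
  have hxa : x ^ 2 < a ^ 2 := sq_lt_sq' hx.1 hx.2
  set b := √(1 - a ^ 2)
  set s := √(1 - x ^ 2)
  set u := b / a * (x / s)
  have hb2 : b ^ 2 = 1 - a ^ 2 := sq_sqrt (by nlinarith)
  have hs2 : s ^ 2 = 1 - x ^ 2 := sq_sqrt (by linarith)
  have hs : 0 < s := sqrt_pos.2 (by linarith)
  have hr : 0 < √(a ^ 2 - x ^ 2) := sqrt_pos.2 (by linarith)
  have hr2 : √(a ^ 2 - x ^ 2) ^ 2 = a ^ 2 - x ^ 2 := sq_sqrt (by linarith)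
  have hu : 1 - u ^ 2 = (√(a ^ 2 - x ^ 2) / (a * s)) ^ 2 := by
    simp only [u]
    field_simp
    linear_combination a ^ 2 * hs2 - x ^ 2 * hb2 - hr2
  have hu1 : -1 < u ∧ u < 1 := by
    rw [← abs_lt, ← sq_lt_one_iff_abs_lt_one]
    have : 0 < 1 - u ^ 2 := by rw [hu]; positivity
    linarith
  refine (((hasDerivAt_arcsin hu1.1.ne' hu1.2.ne).comp x
    ((hasDerivAt_div_sqrt_one_sub_sq hx1).const_mul (b / a))).div_const π).congr_deriv ?_
  rw [hu, sqrt_sq (by positivity)]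
  field_simp
  change s * b / ((1 - x ^ 2) * s) = _
  field_simp

theorem konno_density_integrates_to_one (a : ℝ) (ha : 0 < a) (ha1 : a < 1) :
    ∫ x in (-a)..a, Real.sqrt (1 - a^2) / (π * (1 - x^2) * Real.sqrt (a^2 - x^2)) = 1 := by
  have hle : -a ≤ a := by linarith
  have hcont := continuousOn_konnoPrimitive ha1
  have hderiv := fun x (hx : x ∈ Ioo (-a) a) => hasDerivAt_konnoPrimitive ha1 hx
  have hnonneg : ∀ x ∈ Ioo (-a) a, 0 ≤ √(1 - a ^ 2) / (π * (1 - x ^ 2) * √(a ^ 2 - x ^ 2)) := by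
    intro x hx
    have : 0 < 1 - x ^ 2 := by linarith [sq_lt_one_of_mem_Icc ha1 (Ioo_subset_Icc_self hx)]
    positivity
  have hint := (intervalIntegrable_iff_integrableOn_Ioc_of_le hle).2
    (intervalIntegral.integrableOn_deriv_of_nonneg hcont hderiv hnonneg)
  rw [intervalIntegral.integral_eq_sub_of_hasDerivAt_of_le hle hcont hderiv hint,
    konnoPrimitive_neg, konnoPrimitive_self ha ha1]
  norm_num
end

section
/- Let w(x) = (−x^3+5x^2)/(x^2+4) for x ≥ 0 and w(x) = (−x^3+x^2)/(x^2+4) for x < 0, and f_K(x) = 1/(π(1−x^2)√(1−2x^2)) on (−1/√2, 1/√2). Then ∫_{−1/√2}^{1/√2} w(x) f_K(x) dx = 1/5. -/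
/-!
Split the integral at `0`. On each half, `w(x) / (1 - x²)` has a partial fraction
decomposition `6 (c₂ - c₁ x) / (x² + 4) + c₃ / (1 - x) + c₄ / (1 + x)`, and against
`1 / (π √(1 - 2x²))` each term has an elementary antiderivative (a logarithm or an arcsine).
The integrand is unbounded at `±1/√2` but nonnegative, so a primitive continuous up to the
endpoints already makes it integrable. Both primitives take the same value at `0`, and at
`±1/√2` only the arcsines survive, each equal to `±π/2`; the integral is `1/6 + 1/30 = 1/5`.
-/

open Real

noncomputable def wojcikWeightHalf (x : ℝ) : ℝ :=
  if 0 ≤ x then (-x^3 + 5 * x^2) / (x^2 + 4) else (-x^3 + x^2) / (x^2 + 4)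

open Set MeasureTheory intervalIntegral

theorem HasDerivAt.arcsin_div {u v : ℝ → ℝ} {u' v' x : ℝ} (hu : HasDerivAt u u' x)
    (hv : HasDerivAt v v' x) (huv : |u x| < v x) :
    HasDerivAt (fun y => arcsin (u y / v y))
      ((u' * v x - u x * v') / (v x * √(v x ^ 2 - u x ^ 2))) x := by
  have hv0 : 0 < v x := (abs_nonneg _).trans_lt huv
  have hlt : |u x / v x| < 1 := by rwa [abs_div, abs_of_pos hv0, div_lt_one hv0]
  obtain ⟨hl, hr⟩ := abs_lt.mp hlt
  have hsq : √(1 - (u x / v x) ^ 2) = √(v x ^ 2 - u x ^ 2) / v x := by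
    rw [show 1 - (u x / v x) ^ 2 = (v x ^ 2 - u x ^ 2) / v x ^ 2 by field_simp,
      sqrt_div' _ (sq_nonneg _), sqrt_sq hv0.le]
  have hpos : 0 < √(v x ^ 2 - u x ^ 2) :=
    sqrt_pos.2 (by nlinarith [sq_abs (u x), abs_nonneg (u x)])
  refine ((hasDerivAt_arcsin hl.ne' hr.ne).comp x (hu.div hv hv0.ne')).congr_deriv ?_
  rw [hsq]
  field_simp

theorem integral_eq_sub_of_hasDerivAt_of_nonneg {f f' : ℝ → ℝ} {a b : ℝ} (hab : a ≤ b)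
    (hcont : ContinuousOn f (Icc a b)) (hderiv : ∀ x ∈ Ioo a b, HasDerivAt f (f' x) x)
    (hnonneg : ∀ x ∈ Ioo a b, 0 ≤ f' x) :
    IntervalIntegrable f' volume a b ∧ ∫ x in a..b, f' x = f b - f a := by
  have hint : IntervalIntegrable f' volume a b :=
    (intervalIntegrable_iff_integrableOn_Ioc_of_le hab).2
      (integrableOn_deriv_of_nonneg hcont hderiv hnonneg)
  exact ⟨hint, integral_eq_sub_of_hasDerivAt_of_le hab hcont hderiv hint⟩

lemma hasDerivAt_sqrt_one_sub_two_mul_sq {x : ℝ} (hx : 2 * x ^ 2 < 1) :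
    HasDerivAt (fun y => √(1 - 2 * y ^ 2)) (-2 * x / √(1 - 2 * x ^ 2)) x := by
  have h := (((hasDerivAt_pow 2 x).const_mul 2).const_sub 1).sqrt (by linarith)
  refine h.congr_deriv ?_
  field_simp
  ring

noncomputable def logRatio (x : ℝ) : ℝ :=
  log (3 + √(1 - 2 * x ^ 2)) - log (3 - √(1 - 2 * x ^ 2))

noncomputable def arcsinQuad (x : ℝ) : ℝ :=
  arcsin (3 * x / √(x ^ 2 + 4))

noncomputable def arcsinPole (x : ℝ) : ℝ :=
  arcsin ((2 * x - 1) / (√2 * (1 - x)))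

lemma sqrt_one_sub_two_mul_sq_le_one (x : ℝ) : √(1 - 2 * x ^ 2) ≤ 1 :=
  sqrt_le_one.2 (by nlinarith [sq_nonneg x])

lemma continuous_logRatio : Continuous logRatio := by
  have hs : Continuous fun x : ℝ => √(1 - 2 * x ^ 2) := by fun_prop
  have hp (x : ℝ) : 3 + √(1 - 2 * x ^ 2) ≠ 0 := by linarith [sqrt_nonneg (1 - 2 * x ^ 2)]
  have hm (x : ℝ) : 3 - √(1 - 2 * x ^ 2) ≠ 0 := by linarith [sqrt_one_sub_two_mul_sq_le_one x]
  exact ((hs.const_add 3).log hp).sub ((continuous_const.sub hs).log hm)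

lemma continuous_arcsinQuad : Continuous arcsinQuad :=
  continuous_arcsin.comp ((continuous_const.mul continuous_id).div (by fun_prop)
    fun x => (sqrt_pos.2 (by positivity)).ne')

lemma continuousOn_arcsinPole : ContinuousOn arcsinPole (Iio 1) :=
  continuous_arcsin.comp_continuousOn <| ContinuousOn.div (by fun_prop) (by fun_prop)
    fun x hx => mul_ne_zero (by positivity) (sub_ne_zero.2 (ne_of_lt hx).symm)

lemma hasDerivAt_logRatio {x : ℝ} (hx : 2 * x ^ 2 < 1) :
    HasDerivAt logRatio (-6 * x / ((x ^ 2 + 4) * √(1 - 2 * x ^ 2))) x := by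
  have hs := hasDerivAt_sqrt_one_sub_two_mul_sq hx
  have hs0 : 0 < √(1 - 2 * x ^ 2) := sqrt_pos.2 (by linarith)
  have hs1 := sqrt_one_sub_two_mul_sq_le_one x
  have hsq : √(1 - 2 * x ^ 2) ^ 2 = 1 - 2 * x ^ 2 := sq_sqrt (by linarith)
  have h3p : 3 + √(1 - 2 * x ^ 2) ≠ 0 := by linarith
  have h3m : 3 - √(1 - 2 * x ^ 2) ≠ 0 := by linarith
  refine ((hs.const_add 3).log h3p).sub ((hs.const_sub 3).log h3m) |>.congr_deriv ?_
  field_simp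
  linear_combination -6 * x * hsq

lemma hasDerivAt_arcsinQuad {x : ℝ} (hx : 2 * x ^ 2 < 1) :
    HasDerivAt arcsinQuad (6 / ((x ^ 2 + 4) * √(1 - 2 * x ^ 2))) x := by
  have hu : HasDerivAt (fun y => 3 * y) 3 x := by simpa using (hasDerivAt_id x).const_mul 3
  have hv : HasDerivAt (fun y => √(y ^ 2 + 4)) (x / √(x ^ 2 + 4)) x := by
    convert ((hasDerivAt_pow 2 x).add_const 4).sqrt (by positivity) using 1
    field_simp
    ring
  have ht : √(x ^ 2 + 4) ^ 2 = x ^ 2 + 4 := sq_sqrt (by positivity)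
  have ht0 : 0 < √(x ^ 2 + 4) := sqrt_pos.2 (by positivity)
  have hlt : |3 * x| < √(x ^ 2 + 4) := abs_lt_of_sq_lt_sq (by rw [ht]; nlinarith) ht0.le
  have hroot : √(√(x ^ 2 + 4) ^ 2 - (3 * x) ^ 2) = 2 * √(1 - 2 * x ^ 2) := by
    rw [ht, show x ^ 2 + 4 - (3 * x) ^ 2 = 2 ^ 2 * (1 - 2 * x ^ 2) by ring,
      sqrt_mul' _ (by linarith), sqrt_sq zero_le_two]
  refine (HasDerivAt.arcsin_div hu hv hlt).congr_deriv ?_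
  rw [hroot]
  have hs0 : 0 < √(1 - 2 * x ^ 2) := sqrt_pos.2 (by linarith)
  field_simp
  rw [ht]
  ring

lemma hasDerivAt_arcsinPole {x : ℝ} (hx : 2 * x ^ 2 < 1) :
    HasDerivAt arcsinPole (1 / ((1 - x) * √(1 - 2 * x ^ 2))) x := by
  have hu : HasDerivAt (fun y => 2 * y - 1) 2 x := by
    simpa using ((hasDerivAt_id x).const_mul 2).sub_const 1
  have hv : HasDerivAt (fun y => √2 * (1 - y)) (-√2) x := by
    simpa using ((hasDerivAt_id x).const_sub 1).const_mul √2
  have h2 : √2 ^ 2 = 2 := sq_sqrt zero_le_two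
  have hx1 : 0 < 1 - x := by nlinarith
  have hv0 : 0 < √2 * (1 - x) := by positivity
  have hlt : |2 * x - 1| < √2 * (1 - x) :=
    abs_lt_of_sq_lt_sq (by rw [mul_pow, h2]; nlinarith) hv0.le
  have hroot : (√2 * (1 - x)) ^ 2 - (2 * x - 1) ^ 2 = 1 - 2 * x ^ 2 := by
    rw [mul_pow, h2]; ring
  refine (HasDerivAt.arcsin_div hu hv hlt).congr_deriv ?_
  rw [hroot]
  have hs0 : 0 < √(1 - 2 * x ^ 2) := sqrt_pos.2 (by linarith)
  field_simp
  ring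

lemma hasDerivAt_arcsinPole_neg {x : ℝ} (hx : 2 * x ^ 2 < 1) :
    HasDerivAt (fun y => arcsinPole (-y)) (-(1 / ((1 + x) * √(1 - 2 * x ^ 2)))) x := by
  have h := (hasDerivAt_arcsinPole (x := -x) (by rwa [neg_sq])).comp x (hasDerivAt_neg x)
  rw [neg_sq, sub_neg_eq_add, mul_neg_one] at h
  exact h

noncomputable def wojcikPrimitive (c₁ c₂ c₃ c₄ x : ℝ) : ℝ :=
  (c₁ * logRatio x + c₂ * arcsinQuad x + c₃ * arcsinPole x - c₄ * arcsinPole (-x)) / π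

lemma hasDerivAt_wojcikPrimitive (c₁ c₂ c₃ c₄ : ℝ) {x : ℝ} (hx : 2 * x ^ 2 < 1) :
    HasDerivAt (wojcikPrimitive c₁ c₂ c₃ c₄)
      ((6 * (c₂ - c₁ * x) / (x ^ 2 + 4) + c₃ / (1 - x) + c₄ / (1 + x)) /
        (π * √(1 - 2 * x ^ 2))) x := by
  refine (((((hasDerivAt_logRatio hx).const_mul c₁).add
    ((hasDerivAt_arcsinQuad hx).const_mul c₂)).add
    ((hasDerivAt_arcsinPole hx).const_mul c₃)).sub
    ((hasDerivAt_arcsinPole_neg hx).const_mul c₄)).div_const π |>.congr_deriv ?_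
  have hs0 : 0 < √(1 - 2 * x ^ 2) := sqrt_pos.2 (by linarith)
  have hx1 : 0 < 1 - x := by nlinarith
  have hx2 : 0 < 1 + x := by nlinarith
  field_simp
  ring

lemma continuousOn_wojcikPrimitive (c₁ c₂ c₃ c₄ : ℝ) :
    ContinuousOn (wojcikPrimitive c₁ c₂ c₃ c₄) (Ioo (-1) 1) := by
  have hpole : ContinuousOn arcsinPole (Ioo (-1) 1) :=
    continuousOn_arcsinPole.mono Ioo_subset_Iio_self
  have hpole_neg : ContinuousOn (fun x => arcsinPole (-x)) (Ioo (-1) 1) :=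
    continuousOn_arcsinPole.comp continuous_neg.continuousOn fun x hx => neg_lt.2 hx.1
  exact ((((continuous_logRatio.continuousOn.const_smul c₁).add
    (continuous_arcsinQuad.continuousOn.const_smul c₂)).add (hpole.const_smul c₃)).sub
    (hpole_neg.const_smul c₄)).div_const π

lemma logRatio_of_two_mul_sq_eq_one {x : ℝ} (hx : 2 * x ^ 2 = 1) : logRatio x = 0 := by
  simp [logRatio, hx]

lemma arcsinQuad_neg (x : ℝ) : arcsinQuad (-x) = -arcsinQuad x := by
  simp only [arcsinQuad, neg_sq, mul_neg, neg_div, arcsin_neg]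

lemma arcsinQuad_of_two_mul_sq_eq_one {x : ℝ} (hx : 2 * x ^ 2 = 1) (hx0 : 0 < x) :
    arcsinQuad x = π / 2 := by
  have h : 3 * x = √(x ^ 2 + 4) :=
    (sq_eq_sq₀ (by positivity) (sqrt_nonneg _)).1 (by rw [sq_sqrt (by positivity)]; linarith)
  rw [arcsinQuad, ← h, div_self (by positivity), arcsin_one]

lemma arcsinPole_of_two_mul_sq_eq_one {x : ℝ} (hx : 2 * x ^ 2 = 1) (hx0 : 0 < x) :
    arcsinPole x = π / 2 := by
  have hv : 0 < √2 * (1 - x) := mul_pos (by positivity) (by nlinarith)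
  have h : 2 * x - 1 = √2 * (1 - x) := by
    refine (sq_eq_sq₀ (by nlinarith) hv.le).1 ?_
    rw [mul_pow, sq_sqrt zero_le_two]
    linear_combination hx
  rw [arcsinPole, h, div_self hv.ne', arcsin_one]

lemma arcsinPole_neg_of_two_mul_sq_eq_one {x : ℝ} (hx : 2 * x ^ 2 = 1) (hx0 : 0 < x) :
    arcsinPole (-x) = -(π / 2) := by
  have hv : 0 < √2 * (1 + x) := by positivity
  have h : 2 * x + 1 = √2 * (1 + x) := by
    refine (sq_eq_sq₀ (by positivity) hv.le).1 ?_
    rw [mul_pow, sq_sqrt zero_le_two]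
    linear_combination hx
  rw [arcsinPole, show 2 * -x - 1 = -(2 * x + 1) by ring, sub_neg_eq_add, h, neg_div,
    div_self hv.ne', arcsin_neg, arcsin_one]

lemma wojcikPrimitive_of_two_mul_sq_eq_one (c₁ c₂ c₃ c₄ : ℝ) {x : ℝ} (hx : 2 * x ^ 2 = 1)
    (hx0 : 0 < x) : wojcikPrimitive c₁ c₂ c₃ c₄ x = (c₂ + c₃ + c₄) / 2 := by
  rw [wojcikPrimitive, logRatio_of_two_mul_sq_eq_one hx,
    arcsinQuad_of_two_mul_sq_eq_one hx hx0, arcsinPole_of_two_mul_sq_eq_one hx hx0,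
    arcsinPole_neg_of_two_mul_sq_eq_one hx hx0]
  field_simp
  ring

lemma wojcikPrimitive_neg_of_two_mul_sq_eq_one (c₁ c₂ c₃ c₄ : ℝ) {x : ℝ} (hx : 2 * x ^ 2 = 1)
    (hx0 : 0 < x) : wojcikPrimitive c₁ c₂ c₃ c₄ (-x) = -(c₂ + c₃ + c₄) / 2 := by
  rw [wojcikPrimitive, logRatio_of_two_mul_sq_eq_one (by rwa [neg_sq]), arcsinQuad_neg,
    arcsinQuad_of_two_mul_sq_eq_one hx hx0, neg_neg, arcsinPole_of_two_mul_sq_eq_one hx hx0,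
    arcsinPole_neg_of_two_mul_sq_eq_one hx hx0]
  field_simp
  ring

lemma wojcikPrimitive_zero (c₁ c₂ c₃ c₄ : ℝ) :
    wojcikPrimitive c₁ c₂ c₃ c₄ 0 = (c₁ * logRatio 0 + (c₃ - c₄) * arcsinPole 0) / π := by
  simp only [wojcikPrimitive, neg_zero, arcsinQuad, mul_zero, zero_div, arcsin_zero]
  ring

noncomputable def konnoDensity (x : ℝ) : ℝ :=
  1 / (π * (1 - x ^ 2) * √(1 - 2 * x ^ 2))

lemma konnoDensity_nonneg {x : ℝ} (hx : x ^ 2 ≤ 1) : 0 ≤ konnoDensity x :=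
  one_div_nonneg.2 (mul_nonneg (mul_nonneg pi_pos.le (by linarith)) (sqrt_nonneg _))

lemma wojcikWeightHalf_nonneg {x : ℝ} (hx : x ≤ 5) : 0 ≤ wojcikWeightHalf x := by
  unfold wojcikWeightHalf
  split_ifs <;> exact div_nonneg (by nlinarith [sq_nonneg x]) (by positivity)

lemma hasDerivAt_wojcikPrimitive_of_nonneg {x : ℝ} (hx0 : 0 ≤ x) (hx : 2 * x ^ 2 < 1) :
    HasDerivAt (wojcikPrimitive (-2 / 15) (-2 / 3) (2 / 5) (3 / 5))
      (wojcikWeightHalf x * konnoDensity x) x := by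
  refine (hasDerivAt_wojcikPrimitive _ _ _ _ hx).congr_deriv ?_
  have hs0 : 0 < √(1 - 2 * x ^ 2) := sqrt_pos.2 (by linarith)
  have hx1 : 0 < 1 - x := by nlinarith
  have hx2 : 0 < 1 + x := by linarith
  have hx12 : 0 < 1 - x ^ 2 := by nlinarith
  rw [wojcikWeightHalf, if_pos hx0, konnoDensity]
  field_simp
  ring

lemma hasDerivAt_wojcikPrimitive_of_neg {x : ℝ} (hx0 : x < 0) (hx : 2 * x ^ 2 < 1) :
    HasDerivAt (wojcikPrimitive (-2 / 15) (-2 / 15) 0 (1 / 5))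
      (wojcikWeightHalf x * konnoDensity x) x := by
  refine (hasDerivAt_wojcikPrimitive _ _ _ _ hx).congr_deriv ?_
  have hs0 : 0 < √(1 - 2 * x ^ 2) := sqrt_pos.2 (by linarith)
  have hx1 : 0 < 1 - x := by nlinarith
  have hx2 : 0 < 1 + x := by nlinarith
  have hx12 : 0 < 1 - x ^ 2 := by nlinarith
  rw [wojcikWeightHalf, if_neg (not_le.2 hx0), konnoDensity]
  field_simp
  ring

theorem wojcik_half_weight_integral :
    ∫ x in (-(1 / Real.sqrt 2))..(1 / Real.sqrt 2),
      wojcikWeightHalf x * (1 / (π * (1 - x^2) * Real.sqrt (1 - 2 * x^2))) = 1 / 5 := by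
  change ∫ x in -(1 / √2)..1 / √2, wojcikWeightHalf x * konnoDensity x = 1 / 5
  set a := 1 / √2
  have ha0 : 0 < a := by positivity
  have ha2 : 2 * a ^ 2 = 1 := by simp only [a, div_pow, sq_sqrt zero_le_two]; norm_num
  have hsub : Icc (-a) a ⊆ Ioo (-1) 1 := Icc_subset_Ioo (by nlinarith) (by nlinarith)
  have hmem {x : ℝ} (hx : x ∈ Ioo (-a) a) : 2 * x ^ 2 < 1 := by
    linarith [sq_lt_sq' hx.1 hx.2]
  have hnonneg (x : ℝ) (hx : x ∈ Ioo (-a) a) : 0 ≤ wojcikWeightHalf x * konnoDensity x :=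
    mul_nonneg (wojcikWeightHalf_nonneg (by linarith [(hsub (Ioo_subset_Icc_self hx)).2]))
      (konnoDensity_nonneg (by linarith [hmem hx]))
  obtain ⟨hint_left, hval_left⟩ :=
    integral_eq_sub_of_hasDerivAt_of_nonneg (neg_nonpos.2 ha0.le)
    ((continuousOn_wojcikPrimitive _ _ _ _).mono ((Icc_subset_Icc_right ha0.le).trans hsub))
    (fun x hx => hasDerivAt_wojcikPrimitive_of_neg hx.2
      (hmem (Ioo_subset_Ioo_right ha0.le hx)))
    (fun x hx => hnonneg x (Ioo_subset_Ioo_right ha0.le hx))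
  obtain ⟨hint_right, hval_right⟩ := integral_eq_sub_of_hasDerivAt_of_nonneg ha0.le
    ((continuousOn_wojcikPrimitive _ _ _ _).mono
      ((Icc_subset_Icc_left (by linarith)).trans hsub))
    (fun x hx => hasDerivAt_wojcikPrimitive_of_nonneg hx.1.le
      (hmem (Ioo_subset_Ioo_left (by linarith) hx)))
    (fun x hx => hnonneg x (Ioo_subset_Ioo_left (by linarith) hx))
  rw [← integral_add_adjacent_intervals hint_left hint_right, hval_left, hval_right,
    wojcikPrimitive_of_two_mul_sq_eq_one _ _ _ _ ha2 ha0,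
    wojcikPrimitive_neg_of_two_mul_sq_eq_one _ _ _ _ ha2 ha0, wojcikPrimitive_zero,
    wojcikPrimitive_zero]
  ring
end

section
/- Let C = 4/5 and w(x) = 3x²/(4+x²), f_K(x) = 1/(π(1−x²)√(1−2x²)) on (−1/√2,1/√2). Then the measure μ = C δ_0 + w(x)f_K(x)dx is a probability measure: C + ∫_{−1/√2}^{1/√2} w(x)f_K(x) dx = 1. -/
/-!
The substitution `t = x / √(1 - 2x²)` maps `(-1/√2, 1/√2)` onto `ℝ` and turns the density
`w f_K dx` into `3t² / (π (1 + t²) (4 + 9t²)) dt = (3 / (5π)) (1 / (1 + t²) - 4 / (4 + 9t²)) dt`.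
Its primitive `(3 arctan t - 2 arctan (3t/2)) / (5π)` tends to `±1/10` as `t → ±∞`, so the
ballistic part has mass `1/5 = 1 - C`.
-/

open Real Set Filter intervalIntegral
open scoped Topology

theorem integral_eq_sub_of_hasDerivAt_of_tendsto_of_nonneg {f f' : ℝ → ℝ} {a b fa fb : ℝ}
    (hab : a < b) (hderiv : ∀ x ∈ Ioo a b, HasDerivAt f (f' x) x)
    (hnonneg : ∀ x ∈ Ioo a b, 0 ≤ f' x)
    (ha : Tendsto f (𝓝[>] a) (𝓝 fa)) (hb : Tendsto f (𝓝[<] b) (𝓝 fb)) :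
    ∫ y in a..b, f' y = fb - fa := by
  classical
  -- a nonnegative derivative is integrable once its primitive extends continuously to `[a, b]`
  set F := Function.update (Function.update f a fa) b fb
  have hF : EqOn F f (Ioo a b) := fun x hx => by
    simp only [F, Function.update_of_ne hx.2.ne, Function.update_of_ne hx.1.ne']
  have hFderiv : ∀ x ∈ Ioo a b, HasDerivAt F (f' x) x := fun x hx =>
    (hderiv x hx).congr_of_eventuallyEq (eventuallyEq_of_mem (Ioo_mem_nhds hx.1 hx.2) hF)
  have hFcont : ContinuousOn F (Icc a b) := by
    rw [continuousOn_update_iff, continuousOn_update_iff, Icc_sdiff_right, Ico_sdiff_left]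
    refine ⟨⟨fun x hx => (hderiv x hx).continuousAt.continuousWithinAt,
      fun _ => ha.mono_left (nhdsWithin_mono _ Ioo_subset_Ioi_self)⟩, fun _ => ?_⟩
    refine (hb.congr' ?_).mono_left (nhdsWithin_mono _ Ico_subset_Iio_self)
    filter_upwards [Ioo_mem_nhdsLT hab] with x hx using (Function.update_of_ne hx.1.ne' _ _).symm
  have hint : IntervalIntegrable f' MeasureTheory.volume a b := by
    refine intervalIntegrable_deriv_of_nonneg (g := F) ?_ ?_ ?_ <;>
      simp only [uIcc_of_le hab.le, min_eq_left hab.le, max_eq_right hab.le]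
    exacts [hFcont, hFderiv, hnonneg]
  exact integral_eq_sub_of_hasDerivAt_of_tendsto hab hderiv hint ha hb

noncomputable def arctanPrimitive (t : ℝ) : ℝ :=
  (3 * arctan t - 2 * arctan (3 / 2 * t)) / (5 * π)

theorem hasDerivAt_arctanPrimitive (t : ℝ) :
    HasDerivAt arctanPrimitive (3 * t ^ 2 / (π * (1 + t ^ 2) * (4 + 9 * t ^ 2))) t := by
  have h := (((hasDerivAt_id' t).arctan.const_mul 3).sub
    (((hasDerivAt_id' t).const_mul (3 / 2)).arctan.const_mul 2)).div_const (5 * π)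
  refine h.congr_deriv ?_
  field_simp
  ring

theorem arctanPrimitive_neg (t : ℝ) : arctanPrimitive (-t) = -arctanPrimitive t := by
  simp only [arctanPrimitive, mul_neg, arctan_neg]
  ring

theorem tendsto_arctanPrimitive_atTop : Tendsto arctanPrimitive atTop (𝓝 (1 / 10)) := by
  have harctan := tendsto_nhds_of_tendsto_nhdsWithin tendsto_arctan_atTop
  have h := ((harctan.const_mul 3).sub ((harctan.comp
    (tendsto_id.const_mul_atTop (by norm_num : (0 : ℝ) < 3 / 2))).const_mul 2)).div_const (5 * π)
  have hlim : (3 * (π / 2) - 2 * (π / 2)) / (5 * π) = 1 / 10 := by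
    field_simp
    norm_num
  rwa [hlim] at h

noncomputable def ballisticSubst (x : ℝ) : ℝ := x / √(1 - 2 * x ^ 2)

theorem ballisticSubst_neg (x : ℝ) : ballisticSubst (-x) = -ballisticSubst x := by
  simp only [ballisticSubst, neg_sq, neg_div]

theorem one_div_sqrt_two_sq : (1 / √2 : ℝ) ^ 2 = 1 / 2 := by
  rw [div_pow, sq_sqrt zero_le_two, one_pow]

theorem one_sub_two_mul_sq_pos {x : ℝ} (hx : x ∈ Ioo (-(1 / √2)) (1 / √2)) :
    0 < 1 - 2 * x ^ 2 := by
  have := sq_lt_sq' hx.1 hx.2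
  rw [one_div_sqrt_two_sq] at this
  linarith

theorem hasDerivAt_ballisticSubst {x : ℝ} (hx : 0 < 1 - 2 * x ^ 2) :
    HasDerivAt ballisticSubst (1 / √(1 - 2 * x ^ 2) ^ 3) x := by
  have hs : 0 < √(1 - 2 * x ^ 2) := sqrt_pos.mpr hx
  have hs2 : √(1 - 2 * x ^ 2) ^ 2 = 1 - 2 * x ^ 2 := sq_sqrt hx.le
  have hsqrt : HasDerivAt (fun y => √(1 - 2 * y ^ 2)) (-(4 * x) / (2 * √(1 - 2 * x ^ 2))) x := by
    refine HasDerivAt.sqrt ?_ hx.ne'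
    exact (((hasDerivAt_pow 2 x).const_mul 2).const_sub 1).congr_deriv (by ring)
  refine ((hasDerivAt_id' x).div hsqrt hs.ne').congr_deriv ?_
  field_simp
  linear_combination 2 * hs2

theorem tendsto_ballisticSubst_nhdsLT : Tendsto ballisticSubst (𝓝[<] (1 / √2)) atTop := by
  have hc : (0 : ℝ) < 1 / √2 := by positivity
  have hsqrt : Tendsto (fun x : ℝ => √(1 - 2 * x ^ 2)) (𝓝[<] (1 / √2)) (𝓝[>] 0) := by
    refine tendsto_nhdsWithin_of_tendsto_nhds_of_eventually_within _ ?_ ?_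
    · have h : Continuous fun x : ℝ => √(1 - 2 * x ^ 2) := by fun_prop
      convert (h.tendsto (1 / √2)).mono_left nhdsWithin_le_nhds using 2
      rw [one_div_sqrt_two_sq, mul_one_div_cancel two_ne_zero, sub_self, sqrt_zero]
    · filter_upwards [Ioo_mem_nhdsLT (neg_lt_self hc)] with x hx
      exact sqrt_pos.mpr (one_sub_two_mul_sq_pos hx)
  exact (tendsto_nhdsWithin_of_tendsto_nhds tendsto_id).pos_mul_atTop hc
    hsqrt.inv_tendsto_nhdsGT_zero

noncomputable def ballisticDensity (x : ℝ) : ℝ :=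
  3 * x ^ 2 / (4 + x ^ 2) * (1 / (π * (1 - x ^ 2) * √(1 - 2 * x ^ 2)))

noncomputable def ballisticPrimitive (x : ℝ) : ℝ := arctanPrimitive (ballisticSubst x)

theorem hasDerivAt_ballisticPrimitive {x : ℝ} (hx : 0 < 1 - 2 * x ^ 2) :
    HasDerivAt ballisticPrimitive (ballisticDensity x) x := by
  refine ((hasDerivAt_arctanPrimitive _).comp x (hasDerivAt_ballisticSubst hx)).congr_deriv ?_
  have hs : 0 < √(1 - 2 * x ^ 2) := sqrt_pos.mpr hx
  have hs2 : √(1 - 2 * x ^ 2) ^ 2 = 1 - 2 * x ^ 2 := sq_sqrt hx.le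
  have h1 : 0 < 1 - x ^ 2 := by linarith [sq_nonneg x]
  simp only [ballisticDensity, ballisticSubst]
  generalize √(1 - 2 * x ^ 2) = s at hs hs2 ⊢
  field_simp
  linear_combination (-x ^ 2 * (4 + 5 * x ^ 2 + 4 * s ^ 2)) * hs2

theorem ballisticDensity_nonneg {x : ℝ} (hx : 0 < 1 - 2 * x ^ 2) : 0 ≤ ballisticDensity x := by
  have : 0 < 1 - x ^ 2 := by linarith [sq_nonneg x]
  unfold ballisticDensity
  positivity

theorem tendsto_ballisticPrimitive_nhdsLT :
    Tendsto ballisticPrimitive (𝓝[<] (1 / √2)) (𝓝 (1 / 10)) :=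
  tendsto_arctanPrimitive_atTop.comp tendsto_ballisticSubst_nhdsLT

theorem tendsto_ballisticPrimitive_nhdsGT :
    Tendsto ballisticPrimitive (𝓝[>] (-(1 / √2))) (𝓝 (-(1 / 10))) := by
  have h : ballisticPrimitive = fun x => -ballisticPrimitive (-x) := by
    funext x
    simp only [ballisticPrimitive, ballisticSubst_neg, arctanPrimitive_neg, neg_neg]
  rw [h]
  exact (tendsto_ballisticPrimitive_nhdsLT.comp tendsto_neg_nhdsGT_neg).neg

theorem wojcik_weak_limit_probability_measure :
    (4 / 5 : ℝ) + ∫ x in (-(1 / Real.sqrt 2))..(1 / Real.sqrt 2),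
      (3 * x ^ 2 / (4 + x ^ 2)) * (1 / (π * (1 - x ^ 2) * Real.sqrt (1 - 2 * x ^ 2))) = 1 := by
  change 4 / 5 + ∫ x in (-(1 / √2))..(1 / √2), ballisticDensity x = 1
  rw [integral_eq_sub_of_hasDerivAt_of_tendsto_of_nonneg (neg_lt_self (by positivity))
    (fun x hx => hasDerivAt_ballisticPrimitive (one_sub_two_mul_sq_pos hx))
    (fun x hx => ballisticDensity_nonneg (one_sub_two_mul_sq_pos hx))
    tendsto_ballisticPrimitive_nhdsGT tendsto_ballisticPrimitive_nhdsLT]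
  norm_num
end
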